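/- Let 0 < t < s be integers (a vertex of type 9^0). Let M be the matrix with rows (1, 0, 0), (x, 1, k), (y, 0, 1), where k ∈ 𝒪/𝒫^{s-t}, x ∈ 𝒫/𝒫^{s}, and y ∈ 𝒫/𝒫^{t}. Then M represents a γ-fixed point at the vertex (s,t) if and only if v(k) ≥ s − t − n, v(y) ≥ t − m, and k·y·(1 − u₃/u₁) + x·(u₂/u₁ − 1) ∈ 𝒫^{s}. -/

import Mathlib

noncomputable section

/-- The element π of F = K((π)). -/
def pp (K : Type*) [Field K] : LaurentSeries K := HahnSeries.single (1 : ℤ) (1 : K)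

/-- The π-adic valuation on F = K((π)), with v(0) = ⊤. -/
def vv {K : Type*} [Field K] (x : LaurentSeries K) : WithTop ℤ := x.orderTop

/-- x ∈ 𝒫^r, i.e. v(x) ≥ r. -/
def inP {K : Type*} [Field K] (r : ℤ) (x : LaurentSeries K) : Prop := (r : WithTop ℤ) ≤ vv x

/-- x ∈ 𝒫^r/𝒫^{r'} : x is a polynomial x_r π^r + ⋯ + x_{r'-1} π^{r'-1} (possibly 0). -/
def inPQ {K : Type*} [Field K] (r r' : ℤ) (x : LaurentSeries K) : Prop :=
  inP r x ∧ ∀ i : ℤ, r' ≤ i → x.coeff i = 0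

/-- Membership in GL₃(𝒪): entries in 𝒪 and determinant a unit of 𝒪. -/
def inGLO {K : Type*} [Field K] (C : Matrix (Fin 3) (Fin 3) (LaurentSeries K)) : Prop :=
  (∀ i j, inP 0 (C i j)) ∧ vv C.det = 0

/-- The matrix x_{(s,t)} = diag(1, π^s, π^t). -/
def xst (K : Type*) [Field K] (s t : ℤ) : Matrix (Fin 3) (Fin 3) (LaurentSeries K) :=
  Matrix.diagonal ![1, pp K ^ s, pp K ^ t]

/-- Membership in the subgroup I^a of GL₃(F). -/
def inIa {K : Type*} [Field K] (a : ℤ) (g : Matrix (Fin 3) (Fin 3) (LaurentSeries K)) : Prop :=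
  g.det ≠ 0 ∧
  vv (g 0 0) = 0 ∧ vv (g 1 1) = 0 ∧ vv (g 2 2) = 0 ∧
  inP (-a) (g 0 1) ∧ inP (-a) (g 0 2) ∧ inP 0 (g 1 2) ∧
  inP (a + 1) (g 1 0) ∧ inP (a + 1) (g 2 0) ∧ inP 1 (g 2 1)

/-- Membership in x_{(s,t)}·GL₃(𝒪)·x_{(s,t)}⁻¹. -/
def inConj {K : Type*} [Field K] (s t : ℤ) (g : Matrix (Fin 3) (Fin 3) (LaurentSeries K)) : Prop :=
  ∃ C, inGLO C ∧ g = xst K s t * C * (xst K s t)⁻¹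

/-- M represents a γ-fixed point at the vertex (s,t): there is C ∈ GL₃(𝒪) with
γ·M·x_{(s,t)} = M·x_{(s,t)}·C. -/
def reprFixed {K : Type*} [Field K] (γ M : Matrix (Fin 3) (Fin 3) (LaurentSeries K))
    (s t : ℤ) : Prop :=
  ∃ C, inGLO C ∧ γ * (M * xst K s t) = M * xst K s t * C

/-!
Since `M x_{(s,t)}` is invertible, the only candidate for `C` is the conjugate
`(M x_{(s,t)})⁻¹ γ (M x_{(s,t)})`. Its diagonal is `u₁, u₂, u₃` and its entries `(0,1)`, `(0,2)`,
`(2,1)` vanish, so its determinant `u₁u₂u₃` is a unit and it lies in `GL₃(𝒪)` exactly when its three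
remaining entries `(u₂ - u₃) k π^{t-s}`, `(u₃ - u₁) y π^{-t}` and
`u₁ (k y (1 - u₃/u₁) + x (u₂/u₁ - 1)) π^{-s}` are integral, and these valuations are read off from `v(u₂ - u₃) = n` and `v(u₃ - u₁) = m`.
-/

open Matrix

section Valuation

variable {K : Type*} [Field K]

lemma vv_mul (a b : LaurentSeries K) : vv (a * b) = vv a + vv b :=
  HahnSeries.orderTop_mul a b

lemma vv_neg (a : LaurentSeries K) : vv (-a) = vv a :=
  HahnSeries.orderTop_neg

lemma vv_pp_zpow (j : ℤ) : vv (pp K ^ j) = j := by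
  rw [pp, ← RatFunc.single_zpow]
  exact HahnSeries.orderTop_single one_ne_zero

lemma pp_ne_zero : pp K ≠ 0 :=
  HahnSeries.single_ne_zero one_ne_zero

lemma ne_zero_of_vv_eq_zero {u : LaurentSeries K} (h : vv u = 0) : u ≠ 0 := by
  rintro rfl
  simp [vv] at h

lemma inP_zero (r : ℤ) : inP r (0 : LaurentSeries K) := by
  simp [inP, vv]

lemma vv_sub_eq_vv_one_sub_div {a : LaurentSeries K} (ha : vv a = 0) (b : LaurentSeries K) :
    vv (a - b) = vv (1 - b / a) := by
  rw [← zero_add (vv (1 - b / a)), ← ha, ← vv_mul, mul_sub, mul_one,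
    mul_div_cancel₀ _ (ne_zero_of_vv_eq_zero ha)]

lemma inP_mul_right_iff {a : LaurentSeries K} {c : ℤ} (ha : vv a = c) (r : ℤ)
    (z : LaurentSeries K) : inP r (z * a) ↔ inP (r - c) z := by
  unfold inP
  rw [vv_mul, ha]
  cases vv z with
  | top => simp
  | coe w => norm_cast; omega

end Valuation

section Matrices

variable {K : Type*} [Field K]

lemma isUnit_det_xst (s t : ℤ) : IsUnit (xst K s t).det := by
  simp [xst, Fin.prod_univ_three, zpow_ne_zero, pp_ne_zero]

lemma reprFixed_iff_inGLO_of_mul_eq {γ M C₀ : Matrix (Fin 3) (Fin 3) (LaurentSeries K)}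
    {s t : ℤ} (hM : IsUnit M.det) (h : γ * (M * xst K s t) = M * xst K s t * C₀) :
    reprFixed γ M s t ↔ inGLO C₀ := by
  have hMx : IsUnit (M * xst K s t).det := by
    rw [det_mul]
    exact hM.mul (isUnit_det_xst s t)
  constructor
  · rintro ⟨C, hC, hCeq⟩
    have : M * xst K s t * C = M * xst K s t * C₀ := hCeq.symm.trans h
    rwa [(Matrix.isUnit_iff_isUnit_det _ |>.mpr hMx).mul_left_cancel this] at hC
  · exact fun hC₀ => ⟨C₀, hC₀, h⟩

lemma inGLO_iff_of_vv_diag_eq_zero {a b c d e f : LaurentSeries K}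
    (ha : vv a = 0) (hc : vv c = 0) (hf : vv f = 0) :
    inGLO !![a, 0, 0; b, c, d; e, 0, f] ↔ inP 0 b ∧ inP 0 d ∧ inP 0 e := by
  have hdet : vv (!![a, 0, 0; b, c, d; e, 0, f]).det = 0 := by
    rw [det_fin_three]
    simp [vv_mul, ha, hc, hf]
  have hunit : ∀ {u : LaurentSeries K}, vv u = 0 → inP 0 u := fun hu => hu.ge
  constructor
  · rintro ⟨hC, -⟩
    exact ⟨hC 1 0, hC 1 2, hC 2 0⟩
  · rintro ⟨hb, hd, he⟩
    refine ⟨fun i j => ?_, hdet⟩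
    fin_cases i <;> fin_cases j <;> simp [hunit, ha, hc, hf, hb, hd, he, inP_zero]

lemma diagonal_mul_eq_mul_conj {u₁ : LaurentSeries K} (hu₁ : u₁ ≠ 0)
    (u₂ u₃ k x y : LaurentSeries K) (s t : ℤ) :
    diagonal ![u₁, u₂, u₃] * (!![1, 0, 0; x, 1, k; y, 0, 1] * xst K s t) =
      !![1, 0, 0; x, 1, k; y, 0, 1] * xst K s t *
        !![u₁, 0, 0;
          (k * y * (1 - u₃ / u₁) + x * (u₂ / u₁ - 1)) * u₁ * pp K ^ (-s), u₂,
            k * (u₂ - u₃) * pp K ^ (t - s);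
          y * (u₃ - u₁) * pp K ^ (-t), 0, u₃] := by
  have hs : pp K ^ s ≠ 0 := zpow_ne_zero _ pp_ne_zero
  have ht : pp K ^ t ≠ 0 := zpow_ne_zero _ pp_ne_zero
  rw [xst, diagonal_vec3, diagonal_vec3, mul_fin_three, mul_fin_three, mul_fin_three,
    _root_.zpow_neg, _root_.zpow_neg, zpow_sub₀ pp_ne_zero]
  refine Matrix.ext fun i j => ?_
  fin_cases i <;> fin_cases j <;> simp <;> field_simp <;> ring

end Matrices

theorem stmt9_general (K : Type*) [Field K]
    (u₁ u₂ u₃ : LaurentSeries K) (m n : ℤ)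
    (hu₁ : vv u₁ = 0) (hu₂ : vv u₂ = 0) (hu₃ : vv u₃ = 0)
    (hv₁₃ : vv (1 - u₁ / u₃) = (m : WithTop ℤ))
    (hv₂₃ : vv (1 - u₂ / u₃) = (n : WithTop ℤ))
    (s t : ℤ)
    (k x y : LaurentSeries K) :
    reprFixed (Matrix.diagonal ![u₁, u₂, u₃]) !![1, 0, 0; x, 1, k; y, 0, 1] s t ↔
      (((s - t - n : ℤ) : WithTop ℤ) ≤ vv k ∧ ((t - m : ℤ) : WithTop ℤ) ≤ vv y ∧
        inP s (k * y * (1 - u₃ / u₁) + x * (u₂ / u₁ - 1))) := by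
  have hv₂₃' : vv (u₂ - u₃) = n := by
    rw [← vv_neg, neg_sub, vv_sub_eq_vv_one_sub_div hu₃, hv₂₃]
  have hv₃₁ : vv (u₃ - u₁) = m := by
    rw [vv_sub_eq_vv_one_sub_div hu₃, hv₁₃]
  rw [reprFixed_iff_inGLO_of_mul_eq (by simp [det_fin_three])
      (diagonal_mul_eq_mul_conj (ne_zero_of_vv_eq_zero hu₁) u₂ u₃ k x y s t),
    inGLO_iff_of_vv_diag_eq_zero hu₁ hu₂ hu₃, inP_mul_right_iff (vv_pp_zpow _),
    inP_mul_right_iff hu₁, inP_mul_right_iff (vv_pp_zpow _), inP_mul_right_iff hv₂₃',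
    inP_mul_right_iff (vv_pp_zpow _), inP_mul_right_iff hv₃₁]
  rw [show (0 : ℤ) - -s - 0 = s by ring, show (0 : ℤ) - (t - s) - n = s - t - n by ring,
    show (0 : ℤ) - -t - m = t - m by ring]
  exact and_rotate

theorem stmt9 (K : Type*) [Field K]
    (u₁ u₂ u₃ : LaurentSeries K) (m n : ℤ)
    (hu₁ : vv u₁ = 0) (hu₂ : vv u₂ = 0) (hu₃ : vv u₃ = 0)
    (h₁₂ : u₁ ≠ u₂) (h₁₃ : u₁ ≠ u₃) (h₂₃ : u₂ ≠ u₃)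
    (hm : 0 ≤ m) (hmn : m ≤ n)
    (hv₁₂ : vv (1 - u₁ / u₂) = (m : WithTop ℤ))
    (hv₁₃ : vv (1 - u₁ / u₃) = (m : WithTop ℤ))
    (hv₂₃ : vv (1 - u₂ / u₃) = (n : WithTop ℤ))
    (s t : ℤ) (ht : 0 < t) (hts : t < s)
    (k x y : LaurentSeries K) (hk : inPQ 0 (s - t) k) (hx : inPQ 1 s x) (hy : inPQ 1 t y) :
    reprFixed (Matrix.diagonal ![u₁, u₂, u₃]) !![1, 0, 0; x, 1, k; y, 0, 1] s t ↔
      (((s - t - n : ℤ) : WithTop ℤ) ≤ vv k ∧ ((t - m : ℤ) : WithTop ℤ) ≤ vv y ∧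
        inP s (k * y * (1 - u₃ / u₁) + x * (u₂ / u₁ - 1))) :=
  stmt9_general K u₁ u₂ u₃ m n hu₁ hu₂ hu₃ hv₁₃ hv₂₃ s t k x y
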